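/- Let b, g ∈ ℂ[T] and N ≥ 1, and suppose θ₀ is an element of an associative ℂ-algebra commuting with an element η, with b(η + θ₀) = b(η) + g-term divisible by θ₀, i.e. b(η+θ₀) − b(η) ∈ θ₀·ℂ[η,θ₀]. Then there exist c, h ∈ ℂ[η, θ₀] such that b(η+θ₀)·b(η+θ₀−1)⋯b(η+θ₀−N+1) = c·b(η) + h·θ₀(θ₀−1)⋯(θ₀−N+1). -/

import Mathlib

/-! Since `a = (x + a) - x` divides `p (x + a) - p x`, each factor `b (η + θ₀ - k)` is congruent
to `b η` modulo `θ₀ - k`; multiplying these congruences one at a time puts the product in the ideal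
generated by `b η` and `∏ (θ₀ - k)`. The computation takes place in the commutative subalgebra
`ℂ[η, θ₀]`. -/

open Polynomial

theorem Polynomial.exists_prod_aeval_add_eq {R S : Type*} [CommSemiring R] [CommRing S]
    [Algebra R S] (p : R[X]) (x : S) (l : List S) :
    ∃ c h : S, (l.map fun a => aeval (x + a) p).prod = c * aeval x p + h * l.prod := by
  induction l with
  | nil => exact ⟨0, 1, by simp⟩
  | cons a l ih =>
    obtain ⟨c, h, ih⟩ := ih
    obtain ⟨g, hg⟩ : a ∣ aeval (x + a) p - aeval x p := by
      simpa [← eval_map_algebraMap] using sub_dvd_eval_sub (x + a) x (p.map (algebraMap R S))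
    refine ⟨aeval (x + a) p * c + h * l.prod, g * h, ?_⟩
    rw [List.map_cons, List.prod_cons, List.prod_cons, ih]
    linear_combination (h * l.prod) * hg

theorem stmt17_general {A : Type*} [Ring A] [Algebra ℂ A] (η θ₀ : A)
    (hcomm : η * θ₀ = θ₀ * η) (b : Polynomial ℂ) (N : ℕ) :
    ∃ c ∈ Algebra.adjoin ℂ ({η, θ₀} : Set A),
      ∃ h ∈ Algebra.adjoin ℂ ({η, θ₀} : Set A),
        ((List.range N).map fun (k : ℕ) => Polynomial.aeval (η + θ₀ - (k : A)) b).prod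
          = c * Polynomial.aeval η b
            + h * ((List.range N).map fun (k : ℕ) => θ₀ - (k : A)).prod := by
  set S := Algebra.adjoin ℂ ({η, θ₀} : Set A)
  have : IsMulCommutative S := Algebra.isMulCommutative_adjoin ℂ (by
    rintro a (rfl | rfl) b (rfl | rfl) <;> first | rfl | exact hcomm | exact hcomm.symm)
  have hη : η ∈ S := Algebra.subset_adjoin (by simp)
  have hθ : θ₀ ∈ S := Algebra.subset_adjoin (by simp)
  open IsMulCommutative in
  obtain ⟨c, h, key⟩ := exists_prod_aeval_add_eq b (⟨η, hη⟩ : S)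
    ((List.range N).map fun k : ℕ => (⟨θ₀, hθ⟩ : S) - k)
  have hval (z : S) : (aeval z b : A) = aeval (z : A) b := (aeval_algHom_apply S.val z b).symm
  refine ⟨c, c.2, h, h.2, ?_⟩
  simpa [map_list_prod, List.map_map, Function.comp_def, hval, add_sub_assoc]
    using congrArg S.val key

/-- Let `η`, `θ₀` be commuting elements of a ℂ-algebra with
`b(η+θ₀) − b(η) ∈ θ₀·ℂ[η,θ₀]`. Then there are `c, h ∈ ℂ[η,θ₀]` with
`b(η+θ₀)b(η+θ₀−1)⋯b(η+θ₀−N+1) = c·b(η) + h·θ₀(θ₀−1)⋯(θ₀−N+1)`. -/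
theorem stmt17 {A : Type*} [Ring A] [Algebra ℂ A] (η θ₀ : A)
    (hcomm : η * θ₀ = θ₀ * η) (b : Polynomial ℂ) (N : ℕ) (hN : 1 ≤ N)
    (hb : ∃ g ∈ Algebra.adjoin ℂ ({η, θ₀} : Set A),
      Polynomial.aeval (η + θ₀) b - Polynomial.aeval η b = θ₀ * g) :
    ∃ c ∈ Algebra.adjoin ℂ ({η, θ₀} : Set A),
      ∃ h ∈ Algebra.adjoin ℂ ({η, θ₀} : Set A),
        ((List.range N).map fun (k : ℕ) => Polynomial.aeval (η + θ₀ - (k : A)) b).prod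
          = c * Polynomial.aeval η b
            + h * ((List.range N).map fun (k : ℕ) => θ₀ - (k : A)).prod :=
  stmt17_general η θ₀ hcomm b N
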